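/- Existence and uniqueness of the normal displacement defining the mapping Ψ (well-definedness of d in equation (3.1) of the paper): Let U ⊆ ℝⁿ be open, x ∈ U, and r > 0 with the closed ball of radius r around x contained in U. Let φ : ℝⁿ → ℝ be differentiable on U with m ≤ ‖∇φ(y)‖ ≤ M for all y ∈ U (with constants 0 < m ≤ M) and with K-Lipschitz gradient on U (K > 0). Set δ := min( m² / (2 K M²), r / M ). Then for every target value c ∈ ℝ with |c − φ(x)| ≤ (m²/2) · δ, there exists a unique d ∈ [−δ, δ] such that φ(x + d ∇φ(x)) = c. -/

import Mathlib

open Metric Set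
open scoped InnerProductSpace

/-!
Along the normal line `t ↦ x + t • ∇φ(x)` the derivative of `φ` is `⟪∇φ(x + t∇φ(x)), ∇φ(x)⟫`,
which by the Lipschitz bound differs from `‖∇φ(x)‖² ≥ m²` by at most `K |t| M² ≤ m²/2` as long as
`|t| ≤ δ`. So `t ↦ φ(x + t∇φ(x))` grows at rate at least `m²/2` on `[-δ, δ]`: it is injective
there and its values at `±δ` lie on either side of `c`, and the intermediate value theorem
produces `d`.
-/

theorem existsUnique_mem_Icc_eq_of_le_deriv {f f' : ℝ → ℝ} {μ δ c : ℝ} (hμ : 0 < μ)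
    (hf : ∀ t ∈ Icc (-δ) δ, HasDerivAt f (f' t) t) (hf' : ∀ t ∈ Icc (-δ) δ, μ ≤ f' t)
    (hc : |c - f 0| ≤ μ * δ) :
    ∃! t, t ∈ Icc (-δ) δ ∧ f t = c := by
  have hδ : 0 ≤ δ := nonneg_of_mul_nonneg_right ((abs_nonneg _).trans hc) hμ
  have hcont : ContinuousOn f (Icc (-δ) δ) := fun t ht => (hf t ht).continuousAt.continuousWithinAt
  have hgrow : ∀ a ∈ Icc (-δ) δ, ∀ b ∈ Icc (-δ) δ, a ≤ b → μ * (b - a) ≤ f b - f a := by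
    refine (convex_Icc _ _).mul_sub_le_image_sub_of_le_deriv hcont ?_ ?_ <;>
      rw [interior_Icc] <;> intro t ht
    · exact (hf t (Ioo_subset_Icc_self ht)).differentiableAt.differentiableWithinAt
    · rw [(hf t (Ioo_subset_Icc_self ht)).deriv]
      exact hf' t (Ioo_subset_Icc_self ht)
  have hmono : StrictMonoOn f (Icc (-δ) δ) := fun a ha b hb hab => by
    nlinarith [hgrow a ha b hb hab.le]
  have h0 : (0 : ℝ) ∈ Icc (-δ) δ := ⟨neg_nonpos.2 hδ, hδ⟩
  have hlow := hgrow (-δ) (left_mem_Icc.2 (by linarith)) 0 h0 (neg_nonpos.2 hδ)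
  have hupp := hgrow 0 h0 δ (right_mem_Icc.2 (by linarith)) hδ
  have hcmem : c ∈ Icc (f (-δ)) (f δ) :=
    ⟨by linarith [(abs_le.1 hc).1], by linarith [(abs_le.1 hc).2]⟩
  obtain ⟨t, ht, rfl⟩ := intermediate_value_Icc (by linarith : -δ ≤ δ) hcont hcmem
  exact ⟨t, ⟨ht, rfl⟩, fun s ⟨hs, hst⟩ => hmono.injOn hs ht hst⟩

section InnerProductSpace

variable {E : Type*} [NormedAddCommGroup E] [InnerProductSpace ℝ E]

theorem norm_sq_mul_one_sub_le_real_inner {u v : E} {K t : ℝ} (h : ‖v - u‖ ≤ K * ‖t • u‖) :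
    ‖u‖ ^ 2 * (1 - K * |t|) ≤ ⟪v, u⟫_ℝ := by
  have hsplit : ⟪v, u⟫_ℝ = ‖u‖ ^ 2 + ⟪v - u, u⟫_ℝ := by
    rw [inner_sub_left, real_inner_self_eq_norm_sq]; ring
  have hcs := neg_le_of_abs_le (abs_real_inner_le_norm (v - u) u)
  rw [norm_smul, Real.norm_eq_abs] at h
  nlinarith [mul_le_mul_of_nonneg_right h (norm_nonneg u)]

theorem half_sq_le_real_inner {u v : E} {m M K δ t : ℝ} (hm : 0 ≤ m) (hmu : m ≤ ‖u‖)
    (huM : ‖u‖ ≤ M) (hK : 0 ≤ K) (ht : |t| ≤ δ) (hδ : K * δ * M ^ 2 ≤ m ^ 2 / 2)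
    (h : ‖v - u‖ ≤ K * ‖t • u‖) :
    m ^ 2 / 2 ≤ ⟪v, u⟫_ℝ := by
  have hmu2 : m ^ 2 ≤ ‖u‖ ^ 2 := by gcongr
  have huM2 : K * |t| * ‖u‖ ^ 2 ≤ K * δ * M ^ 2 := by
    have := (abs_nonneg t).trans ht
    gcongr
  linarith [norm_sq_mul_one_sub_le_real_inner h]

variable [CompleteSpace E]

theorem DifferentiableAt.hasDerivAt_comp_add_smul {φ : E → ℝ} {x v : E} {t : ℝ}
    (h : DifferentiableAt ℝ φ (x + t • v)) :
    HasDerivAt (fun s : ℝ => φ (x + s • v)) (⟪gradient φ (x + t • v), v⟫_ℝ) t := by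
  have hline : HasDerivAt (fun s : ℝ => x + s • v) v t := by
    simpa using ((hasDerivAt_id t).smul_const v).const_add x
  exact h.hasGradientAt.hasFDerivAt.comp_hasDerivAt t hline

end InnerProductSpace

theorem exists_unique_normal_displacement_general {n : ℕ}
    (U : Set (EuclideanSpace ℝ (Fin n)))
    (x : EuclideanSpace ℝ (Fin n)) (r : ℝ) (hr : 0 < r)
    (hball : closedBall x r ⊆ U)
    (φ : EuclideanSpace ℝ (Fin n) → ℝ)
    (hdiff : ∀ y ∈ U, DifferentiableAt ℝ φ y)
    (m M K : ℝ) (hm : 0 < m) (hmM : m ≤ M) (hK : 0 < K)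
    (hgrad_lb : ∀ y ∈ U, m ≤ ‖gradient φ y‖)
    (hgrad_ub : ∀ y ∈ U, ‖gradient φ y‖ ≤ M)
    (hlip : ∀ y ∈ U, ∀ z ∈ U, ‖gradient φ y - gradient φ z‖ ≤ K * ‖y - z‖)
    (δ : ℝ) (hδ : δ = min (m ^ 2 / (2 * K * M ^ 2)) (r / M))
    (c : ℝ) (hc : |c - φ x| ≤ m ^ 2 / 2 * δ) :
    ∃! d : ℝ, d ∈ Icc (-δ) δ ∧ φ (x + d • gradient φ x) = c := by
  set G := gradient φ x
  have hM : 0 < M := hm.trans_le hmM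
  have hxU : x ∈ U := hball (mem_closedBall_self hr.le)
  have hδK : K * δ * M ^ 2 ≤ m ^ 2 / 2 := by
    have := hδ ▸ min_le_left _ _
    rw [le_div_iff₀ (by positivity)] at this
    linarith
  have hδr : δ * M ≤ r := (le_div_iff₀ hM).1 (hδ ▸ min_le_right _ _)
  have hline : ∀ t ∈ Icc (-δ) δ, x + t • G ∈ U := fun t ht => hball <| by
    have := hgrad_ub x hxU
    rw [mem_closedBall, dist_eq_norm, add_sub_cancel_left, norm_smul, Real.norm_eq_abs]
    nlinarith [abs_le.2 ht, abs_nonneg t, norm_nonneg G]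
  refine existsUnique_mem_Icc_eq_of_le_deriv (μ := m ^ 2 / 2) (by positivity)
    (fun t ht => (hdiff _ (hline t ht)).hasDerivAt_comp_add_smul) (fun t ht => ?_)
    (by simpa using hc)
  have hlipt := hlip _ (hline t ht) x hxU
  rw [add_sub_cancel_left] at hlipt
  exact half_sq_le_real_inner hm.le (hgrad_lb x hxU) (hgrad_ub x hxU) hK.le (abs_le.2 ht) hδK hlipt

/-- Existence and uniqueness of the normal displacement defining the mapping `Ψ`:
under the same assumptions on the level set function `φ` as in the bi-Lipschitz
estimate, with `δ = min (m²/(2KM²)) (r/M)`, for every target value `c` with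
`|c - φ(x)| ≤ (m²/2)δ` there exists a unique `d ∈ [-δ, δ]` such that
`φ(x + d∇φ(x)) = c`. -/
theorem exists_unique_normal_displacement {n : ℕ}
    (U : Set (EuclideanSpace ℝ (Fin n))) (hU : IsOpen U)
    (x : EuclideanSpace ℝ (Fin n)) (r : ℝ) (hr : 0 < r)
    (hball : closedBall x r ⊆ U)
    (φ : EuclideanSpace ℝ (Fin n) → ℝ)
    (hdiff : ∀ y ∈ U, DifferentiableAt ℝ φ y)
    (m M K : ℝ) (hm : 0 < m) (hmM : m ≤ M) (hK : 0 < K)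
    (hgrad_lb : ∀ y ∈ U, m ≤ ‖gradient φ y‖)
    (hgrad_ub : ∀ y ∈ U, ‖gradient φ y‖ ≤ M)
    (hlip : ∀ y ∈ U, ∀ z ∈ U, ‖gradient φ y - gradient φ z‖ ≤ K * ‖y - z‖)
    (δ : ℝ) (hδ : δ = min (m ^ 2 / (2 * K * M ^ 2)) (r / M))
    (c : ℝ) (hc : |c - φ x| ≤ m ^ 2 / 2 * δ) :
    ∃! d : ℝ, d ∈ Icc (-δ) δ ∧ φ (x + d • gradient φ x) = c :=
  exists_unique_normal_displacement_general U x r hr hball φ hdiff m M K hm hmM hK hgrad_lb hgrad_ub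
    hlip δ hδ c hc
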